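/- arXiv:1605.00252 — 8 statements merged into one kernel-verified Lean document; each statement's English description precedes it below -/
import Mathlib

section
/- If X is integrable and E[e^{-ηX}] < ∞ for some η > 0, then the Hellinger-transformed expectation converges to the ordinary expectation as η goes to zero: lim_{η ↓ 0} (1/η)(1 - E[e^{-ηX}]) = E[X]. -/
open MeasureTheory Real Filter

-- pointwise bound
lemma aux_bound (x η₀ η : ℝ) (hη₀ : 0 < η₀) (h1 : 0 < η) (h2 : η ≤ η₀) :
    |η⁻¹ * (1 - Real.exp (-η * x))| ≤ |x| + (1 + Real.exp (-η₀ * x)) / η₀ := by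
  have hs1 : 0 ≤ η / η₀ := by positivity
  have hs2 : 1 - η / η₀ ≥ 0 := by
    rw [ge_iff_le, sub_nonneg, div_le_one hη₀]; exact h2
  have hconv := convexOn_exp.2 (Set.mem_univ (0:ℝ)) (Set.mem_univ (-η₀ * x))
      hs2 hs1 (by ring)
  simp only [smul_eq_mul, mul_zero, zero_add, Real.exp_zero, mul_one] at hconv
  have heq : (η / η₀) * (-η₀ * x) = -η * x := by field_simp
  rw [heq] at hconv
  -- hconv : exp (-η * x) ≤ (1 - η/η₀) + η/η₀ * exp (-η₀ * x)
  have hupper : η⁻¹ * (1 - Real.exp (-η * x)) ≤ x := by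
    have := Real.add_one_le_exp (-η * x)
    rw [inv_mul_le_iff₀ h1] -- may need different name
    nlinarith
  have hlower : η⁻¹ * (1 - Real.exp (-η * x)) ≥ (1 - Real.exp (-η₀ * x)) / η₀ := by
    have h3 : 1 - Real.exp (-η * x) ≥ (η / η₀) * (1 - Real.exp (-η₀ * x)) := by nlinarith
    rw [ge_iff_le, div_le_iff₀ hη₀]
    calc (1 - Real.exp (-η₀ * x)) = η⁻¹ * ((η/η₀) * (1 - Real.exp (-η₀*x))) * η₀ := by
          field_simp
      _ ≤ η⁻¹ * (1 - Real.exp (-η * x)) * η₀ := by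
          apply mul_le_mul_of_nonneg_right _ hη₀.le
          exact mul_le_mul_of_nonneg_left h3 (by positivity)
  rw [abs_le]
  have hexpos : 0 < Real.exp (-η₀ * x) := Real.exp_pos _
  constructor
  · have : -((1 + Real.exp (-η₀ * x)) / η₀) ≤ (1 - Real.exp (-η₀ * x)) / η₀ := by
      rw [← neg_div, div_le_div_iff₀ (by positivity) hη₀]
      nlinarith
    have habs : -|x| ≤ 0 := neg_nonpos_of_nonneg (abs_nonneg x)
    linarith
  · have : x ≤ |x| := le_abs_self x
    have : 0 ≤ (1 + Real.exp (-η₀ * x)) / η₀ := by positivity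
    linarith

/-- If `X` is integrable and `E[e^{-η₀ X}] < ∞` for some `η₀ > 0`, then the
Hellinger-transformed expectation `(1/η)(1 - E[e^{-ηX}])` converges to `E[X]` as `η ↓ 0`. -/
theorem hellinger_expectation_tendsto
    {Ω : Type*} [MeasurableSpace Ω] (μ : Measure Ω) [IsProbabilityMeasure μ]
    (X : Ω → ℝ) (hX : Integrable X μ) {η₀ : ℝ} (hη₀ : 0 < η₀)
    (hexp : Integrable (fun ω => Real.exp (-η₀ * X ω)) μ) :
    Tendsto (fun η : ℝ => (1/η) * (1 - ∫ ω, Real.exp (-η * X ω) ∂μ))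
      (nhdsWithin 0 (Set.Ioi 0)) (nhds (∫ ω, X ω ∂μ)) := by
  have hmem : Set.Ioc (0:ℝ) η₀ ∈ nhdsWithin (0:ℝ) (Set.Ioi 0) :=
    Ioc_mem_nhdsGT_of_mem (by simp [hη₀])
  -- integrability of exp(-ηX) for η ∈ Ioc 0 η₀
  have hint : ∀ η ∈ Set.Ioc (0:ℝ) η₀, Integrable (fun ω => Real.exp (-η * X ω)) μ := by
    intro η hη
    refine Integrable.mono' ((integrable_const 1).add hexp) ?_ ?_
    · exact (Real.continuous_exp.comp_aestronglyMeasurable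
        (hX.aestronglyMeasurable.const_mul (-η)))
    · filter_upwards with ω
      simp only [Pi.add_apply]
      rw [Real.norm_eq_abs, abs_of_pos (Real.exp_pos _)]
      rcases le_or_gt 0 (X ω) with h | h
      · have : Real.exp (-η * X ω) ≤ 1 := by
          rw [← Real.exp_zero]
          exact Real.exp_le_exp.mpr (by nlinarith [hη.1])
        have := (Real.exp_pos (-η₀ * X ω)).le
        linarith
      · have : Real.exp (-η * X ω) ≤ Real.exp (-η₀ * X ω) :=
          Real.exp_le_exp.mpr (by nlinarith [hη.1, hη.2])
        linarith
  -- dominated convergence for F η ω = η⁻¹ * (1 - exp (-η X ω))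
  have key : Tendsto (fun η : ℝ => ∫ ω, η⁻¹ * (1 - Real.exp (-η * X ω)) ∂μ)
      (nhdsWithin 0 (Set.Ioi 0)) (nhds (∫ ω, X ω ∂μ)) := by
    refine tendsto_integral_filter_of_dominated_convergence
      (fun ω => |X ω| + (1 + Real.exp (-η₀ * X ω)) / η₀) ?_ ?_ ?_ ?_
    · filter_upwards [hmem] with η hη
      exact ((aestronglyMeasurable_const.sub
        (Real.continuous_exp.comp_aestronglyMeasurable
          (hX.aestronglyMeasurable.const_mul (-η)))).const_mul _)
    · filter_upwards [hmem] with η hη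
      filter_upwards with ω
      rw [Real.norm_eq_abs]
      exact aux_bound (X ω) η₀ η hη₀ hη.1 hη.2
    · exact hX.abs.add (((integrable_const 1).add hexp).div_const η₀)
    · filter_upwards with ω
      have hd : HasDerivAt (fun η : ℝ => 1 - Real.exp (-η * X ω)) (X ω) 0 := by
        have h1 : HasDerivAt (fun η : ℝ => -η * X ω) (-X ω) 0 := by
          simpa using ((hasDerivAt_id (0:ℝ)).neg.mul_const (X ω))
        have h2 := h1.exp
        simp only [neg_zero, zero_mul, Real.exp_zero, one_mul] at h2
        simpa using h2.const_sub 1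
      have := hasDerivAt_iff_tendsto_slope.mp hd
      have h3 : Tendsto (slope (fun η : ℝ => 1 - Real.exp (-η * X ω)) 0)
          (nhdsWithin 0 (Set.Ioi 0)) (nhds (X ω)) :=
        this.mono_left (nhdsWithin_mono 0 (fun η hη => ne_of_gt hη))
      refine h3.congr' ?_
      filter_upwards [self_mem_nhdsWithin] with η hη
      simp only [slope_def_field, sub_zero]
      rw [div_eq_inv_mul]
      norm_num
  refine key.congr' ?_
  filter_upwards [hmem] with η hη
  have h1 : Integrable (fun ω => Real.exp (-η * X ω)) μ := hint η hη
  rw [integral_const_mul]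
  rw [integral_sub (integrable_const 1) h1, integral_const]
  simp [one_div]
end

section
/- (Weak transitivity of ESI) Let (U, V) be a pair of real random variables on the same probability space, η > 0, and a, b ∈ ℝ. If E[e^{η(U - a)}] ≤ 1 and E[e^{η(V - b)}] ≤ 1, then E[e^{(η/2)((U + V) - (a + b))}] ≤ 1. -/
open MeasureTheory Real

/-- Weak transitivity of ESI: if `E[e^{η(U - a)}] ≤ 1` and `E[e^{η(V - b)}] ≤ 1`
then `E[e^{(η/2)((U + V) - (a + b))}] ≤ 1`. -/
theorem esi_weak_transitivity
    {Ω : Type*} [MeasurableSpace Ω] (μ : Measure Ω) [IsProbabilityMeasure μ]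
    (U V : Ω → ℝ) {η : ℝ} (hη : 0 < η) (a b : ℝ)
    (hUint : Integrable (fun ω => Real.exp (η * (U ω - a))) μ)
    (hVint : Integrable (fun ω => Real.exp (η * (V ω - b))) μ)
    (hU : ∫ ω, Real.exp (η * (U ω - a)) ∂μ ≤ 1)
    (hV : ∫ ω, Real.exp (η * (V ω - b)) ∂μ ≤ 1) :
    ∫ ω, Real.exp ((η/2) * ((U ω + V ω) - (a + b))) ∂μ ≤ 1 := by
  set f : Ω → ℝ := fun ω => Real.exp (η * (U ω - a)) with hf
  set g : Ω → ℝ := fun ω => Real.exp (η * (V ω - b)) with hg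
  have key : ∀ ω, Real.exp ((η/2) * ((U ω + V ω) - (a + b))) ≤ (f ω + g ω) / 2 := by
    intro ω
    have heq : Real.exp ((η/2) * ((U ω + V ω) - (a + b)))
        = Real.sqrt (f ω) * Real.sqrt (g ω) := by
      rw [hf, hg]
      simp only
      rw [← Real.exp_half, ← Real.exp_half, ← Real.exp_add]
      ring_nf
    rw [heq]
    have h1 := Real.sq_sqrt (Real.exp_pos (η * (U ω - a))).le
    have h2 := Real.sq_sqrt (Real.exp_pos (η * (V ω - b))).le
    have h3 := sq_nonneg (Real.sqrt (f ω) - Real.sqrt (g ω))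
    simp only [hf, hg] at *
    nlinarith
  have hmeas : AEStronglyMeasurable
      (fun ω => Real.exp ((η/2) * ((U ω + V ω) - (a + b)))) μ := by
    have : (fun ω => Real.exp ((η/2) * ((U ω + V ω) - (a + b))))
        = fun ω => Real.sqrt (f ω) * Real.sqrt (g ω) := by
      funext ω
      rw [hf, hg]; simp only
      rw [← Real.exp_half, ← Real.exp_half, ← Real.exp_add]
      ring_nf
    rw [this]
    exact (Real.continuous_sqrt.comp_aestronglyMeasurable hUint.1).mul
      (Real.continuous_sqrt.comp_aestronglyMeasurable hVint.1)
  have hint2 : Integrable (fun ω => (f ω + g ω) / 2) μ := (hUint.add hVint).div_const 2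
  have hint1 : Integrable (fun ω => Real.exp ((η/2) * ((U ω + V ω) - (a + b)))) μ := by
    refine hint2.mono' hmeas (Filter.Eventually.of_forall fun ω => ?_)
    rw [Real.norm_eq_abs, abs_of_pos (Real.exp_pos _)]
    exact key ω
  calc ∫ ω, Real.exp ((η/2) * ((U ω + V ω) - (a + b))) ∂μ
      ≤ ∫ ω, (f ω + g ω) / 2 ∂μ := integral_mono hint1 hint2 key
    _ = ((∫ ω, f ω ∂μ) + ∫ ω, g ω ∂μ) / 2 := by
        rw [integral_div, integral_add hUint hVint]
    _ ≤ 1 := by linarith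
end

section
/- Let g_η(r) := (1/η)(1 - r^η) - (1 - r) for η ∈ (0,1) and r > 0, and let g_0(r) := -log r - (1 - r). Then for any 0 < η < 1 and V > 1, and all r with 1/V ≤ r, one has g_0(r) ≤ C · g_η(r), where C = ((η/(1-η)) log V + 1/(1-η)). -/
/-!
Substitute `r = exp u`. For `u ≥ 0` the function
`u ↦ η g_η(eᵘ) - η(1-η) g₀(eᵘ)` vanishes at `0` and has derivative
`η (η eᵘ + (1-η) - e^{ηu}) ≥ 0` (convexity of `exp`), so `(1-η) g₀ ≤ g_η`.
For `u ≤ 0` the function `u ↦ (1-ηu) η g_η(eᵘ) - η(1-η) g₀(eᵘ)` vanishes at `0` and has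
derivative `η² u (e^{ηu} - eᵘ) ≤ 0`, so `(1-η) g₀ ≤ (1 - η log r) g_η`. Since `r ≥ 1/V`
forces `-log r ≤ log V`, both cases give `(1-η) g₀ ≤ (1 + η log V) g_η`.
-/

open Real

noncomputable section

def gZero (r : ℝ) : ℝ := -log r - (1 - r)

def gEta (η r : ℝ) : ℝ := (1 / η) * (1 - r ^ η) - (1 - r)

section ExpForm

variable {η u : ℝ}

theorem exp_mul_le_mul_exp_add_one_sub (hη0 : 0 ≤ η) (hη1 : η ≤ 1) (u : ℝ) :
    exp (η * u) ≤ η * exp u + (1 - η) := by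
  simpa using convexOn_exp.2 (Set.mem_univ u) (Set.mem_univ 0) hη0 (sub_nonneg.2 hη1)
    (add_sub_cancel η 1)

theorem exp_sub_one_sub_le_of_nonneg (hη0 : 0 ≤ η) (hη1 : η ≤ 1) (hu : 0 ≤ u) :
    η * (1 - η) * (exp u - 1 - u) ≤ 1 - exp (η * u) - η * (1 - exp u) := by
  let Ψ : ℝ → ℝ := fun x =>
    1 - exp (η * x) - η * (1 - exp x) - η * (1 - η) * (exp x - 1 - x)
  have hΨ : ∀ x, HasDerivAt Ψ (η * (η * exp x + (1 - η) - exp (η * x))) x := fun x => by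
    have hexp := hasDerivAt_exp x
    exact ((((hasDerivAt_const x 1).sub ((hasDerivAt_id' x).const_mul η).exp).sub
      (((hasDerivAt_const x 1).sub hexp).const_mul η)).sub
      (((hexp.sub_const 1).sub (hasDerivAt_id' x)).const_mul (η * (1 - η)))).congr_deriv
      (by ring)
  have hmono : MonotoneOn Ψ (Set.Ici 0) :=
    monotoneOn_of_hasDerivWithinAt_nonneg (convex_Ici 0)
      (fun x _ => (hΨ x).continuousAt.continuousWithinAt)
      (fun x _ => (hΨ x).hasDerivWithinAt)
      (fun x _ => mul_nonneg hη0 (sub_nonneg.2 (exp_mul_le_mul_exp_add_one_sub hη0 hη1 x)))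
  have h := hmono Set.self_mem_Ici hu hu
  simp only [Ψ, mul_zero, exp_zero, sub_self] at h
  linarith

theorem exp_sub_one_sub_le_of_nonpos (hη1 : η ≤ 1) (hu : u ≤ 0) :
    η * (1 - η) * (exp u - 1 - u)
      ≤ (1 - η * u) * (1 - exp (η * u) - η * (1 - exp u)) := by
  let Φ : ℝ → ℝ := fun x =>
    (1 - η * x) * (1 - exp (η * x) - η * (1 - exp x)) - η * (1 - η) * (exp x - 1 - x)
  have hΦ : ∀ x, HasDerivAt Φ (η ^ 2 * x * (exp (η * x) - exp x)) x := fun x => by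
    have hexp := hasDerivAt_exp x
    have hlin := (hasDerivAt_id' x).const_mul η
    exact ((((hasDerivAt_const x 1).sub hlin).mul
      (((hasDerivAt_const x 1).sub hlin.exp).sub
        (((hasDerivAt_const x 1).sub hexp).const_mul η))).sub
      (((hexp.sub_const 1).sub (hasDerivAt_id' x)).const_mul (η * (1 - η)))).congr_deriv
      (by simp only [Pi.sub_apply]; ring)
  have hanti : AntitoneOn Φ (Set.Iic 0) :=
    antitoneOn_of_hasDerivWithinAt_nonpos (convex_Iic 0)
      (fun x _ => (hΦ x).continuousAt.continuousWithinAt)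
      (fun x _ => (hΦ x).hasDerivWithinAt)
      (fun x hx => by
        rw [interior_Iic] at hx
        have hx : x < 0 := hx
        have : exp x ≤ exp (η * x) := exp_le_exp.2 (by nlinarith)
        exact mul_nonpos_of_nonpos_of_nonneg (by nlinarith) (sub_nonneg.2 this))
  have h := hanti hu Set.self_mem_Iic hu
  simp only [Φ, mul_zero, exp_zero, sub_self, sub_zero] at h
  linarith

end ExpForm

section RForm

variable {η r : ℝ}

theorem eta_mul_gEta (hη : η ≠ 0) (hr : 0 < r) :
    η * gEta η r = 1 - exp (η * log r) - η * (1 - exp (log r)) := by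
  rw [gEta, exp_log hr, rpow_def_of_pos hr, mul_comm (log r)]
  field_simp

theorem gZero_eq (hr : 0 < r) : gZero r = exp (log r) - 1 - log r := by
  rw [gZero, exp_log hr]
  ring

theorem gEta_nonneg (hη0 : 0 < η) (hη1 : η ≤ 1) (hr : 0 < r) : 0 ≤ gEta η r := by
  have h := exp_mul_le_mul_exp_add_one_sub hη0.le hη1 (log r)
  rw [← mul_nonneg_iff_of_pos_left hη0, eta_mul_gEta hη0.ne' hr]
  linarith

theorem one_sub_mul_gZero_le_gEta (hη0 : 0 < η) (hη1 : η ≤ 1) (hr : 1 ≤ r) :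
    (1 - η) * gZero r ≤ gEta η r := by
  have hr0 : 0 < r := one_pos.trans_le hr
  have h := exp_sub_one_sub_le_of_nonneg hη0.le hη1 (log_nonneg hr)
  rw [← gZero_eq hr0, ← eta_mul_gEta hη0.ne' hr0, mul_assoc] at h
  exact le_of_mul_le_mul_left h hη0

theorem one_sub_mul_gZero_le_of_le_one (hη0 : 0 < η) (hη1 : η ≤ 1) (hr0 : 0 < r)
    (hr : r ≤ 1) : (1 - η) * gZero r ≤ (1 - η * log r) * gEta η r := by
  have h := exp_sub_one_sub_le_of_nonpos hη1 (log_nonpos hr0.le hr)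
  rw [← gZero_eq hr0, ← eta_mul_gEta hη0.ne' hr0, mul_assoc,
    mul_left_comm (1 - η * log r)] at h
  exact le_of_mul_le_mul_left h hη0

end RForm

end

/-- With `g_η(r) = (1/η)(1 - r^η) - (1 - r)` and `g_0(r) = -log r - (1 - r)`:
for `0 < η < 1`, `V > 1` and `1/V ≤ r`, one has
`g_0(r) ≤ ((η/(1-η)) log V + 1/(1-η)) · g_η(r)`. -/
theorem g_zero_le_const_mul_g_eta
    {η V r : ℝ} (hη0 : 0 < η) (hη1 : η < 1) (hV : 1 < V) (hr : 1 / V ≤ r) :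
    -Real.log r - (1 - r)
      ≤ ((η / (1 - η)) * Real.log V + 1 / (1 - η))
        * ((1/η) * (1 - r ^ η) - (1 - r)) := by
  have hV0 : 0 < 1 / V := one_div_pos.2 (zero_lt_one.trans hV)
  have hr0 : 0 < r := hV0.trans_le hr
  have hlogr : -log V ≤ log r := by simpa [log_inv] using log_le_log hV0 hr
  have hgEta := gEta_nonneg hη0 hη1.le hr0
  have key : (1 - η) * gZero r ≤ (1 + η * log V) * gEta η r := by
    rcases le_total 1 r with h1 | h1
    · calc (1 - η) * gZero r ≤ gEta η r := one_sub_mul_gZero_le_gEta hη0 hη1.le h1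
        _ ≤ (1 + η * log V) * gEta η r :=
            le_mul_of_one_le_left hgEta (le_add_of_nonneg_right
              (mul_nonneg hη0.le (log_nonneg hV.le)))
    · calc (1 - η) * gZero r ≤ (1 - η * log r) * gEta η r :=
            one_sub_mul_gZero_le_of_le_one hη0 hη1.le hr0 h1
        _ ≤ (1 + η * log V) * gEta η r := by gcongr; nlinarith
  have hC : (η / (1 - η)) * log V + 1 / (1 - η) = (1 + η * log V) / (1 - η) := by ring
  change gZero r ≤ _ * gEta η r
  rw [hC, div_mul_eq_mul_div, le_div_iff₀ (sub_pos.2 hη1), mul_comm]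
  exact key
end

section
/- (KL vs Hellinger under bounded ratio, Birgé–Massart generalization) Let L be a real random variable with E[e^{-η̄L}] ≤ 1 for some η̄ > 0, and suppose L ≤ u almost surely for some u > 0. Then for every η ∈ (0, η̄), E[L] ≤ c_u · (1/η)(1 - E[e^{-ηL}]), where c_u = (ηu + 1)/(1 - η/η̄). -/
/-! With `h_η(x) = (1 - e^{-ηx}) / η` and `c = (ηu + 1) / (1 - η/η̄)` one proves the pointwise
bound `x ≤ c h_η(x) - (c - 1) h_η̄(x)` for `x ≤ u` and takes expectations: the central condition
says exactly that `E[h_η̄(L)] ≥ 0`, so the last term can be dropped.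

The gap `φ` of the pointwise bound vanishes at `0` and `φ'(x) = e^{-ηx} w(x)` with `w` concave,
`w(0) = 0` and `w'(0) ≥ 0`. Hence `φ` decreases on `(-∞, 0]`, and on `[0, u]` it first increases
and then decreases, so it remains to check `φ(u) ≥ 0`. That reduces to the monotonicity of
`(1 - (1 + t) e^{-t}) / t²`, whose derivative has the sign of `(t² + 2t + 2) e^{-t} - 2 ≤ 0`. -/

open MeasureTheory Real Set

noncomputable def hellingerTransform (η x : ℝ) : ℝ := (1 - exp (-η * x)) / η

noncomputable def hellingerGap (η η' c x : ℝ) : ℝ :=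
  c * hellingerTransform η x - (c - 1) * hellingerTransform η' x - x

noncomputable def hellingerGapFactor (η η' c x : ℝ) : ℝ :=
  c - (c - 1) * exp (-(η' - η) * x) - exp (η * x)

noncomputable def klHellingerConst (η η' u : ℝ) : ℝ := (η * u + 1) / (1 - η / η')

theorem convexOn_exp_mul (a : ℝ) : ConvexOn ℝ univ fun x => exp (a * x) :=
  convexOn_exp.comp_linearMap (LinearMap.mul ℝ ℝ a)

theorem antitoneOn_one_sub_one_add_mul_exp_neg_div_sq :
    AntitoneOn (fun t : ℝ => (1 - (1 + t) * exp (-t)) / t ^ 2) (Ioi 0) := by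
  have hderiv : ∀ t : ℝ, t ≠ 0 → HasDerivAt (fun t : ℝ => (1 - (1 + t) * exp (-t)) / t ^ 2)
      ((t * exp (-t) * t ^ 2 - (1 - (1 + t) * exp (-t)) * (2 * t)) / (t ^ 2) ^ 2) t := by
    intro t ht
    have hnum : HasDerivAt (fun t : ℝ => 1 - (1 + t) * exp (-t)) (t * exp (-t)) t := by
      refine ((((hasDerivAt_id' t).const_add 1).mul (hasDerivAt_neg t).exp).const_sub 1)
        |>.congr_deriv ?_
      ring
    refine (hnum.div (hasDerivAt_pow 2 t) (pow_ne_zero 2 ht)).congr_deriv ?_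
    norm_num
  refine antitoneOn_of_hasDerivWithinAt_nonpos (convex_Ioi 0)
    (fun t ht => (hderiv t (ne_of_gt ht)).continuousAt.continuousWithinAt)
    (fun t ht => (hderiv t (ne_of_gt (interior_subset ht))).hasDerivWithinAt) fun t ht => ?_
  have ht : 0 < t := interior_subset ht
  have hquad := quadratic_le_exp_of_nonneg ht.le
  have hinv : exp (-t) * exp t = 1 := by rw [← exp_add]; simp
  apply div_nonpos_of_nonpos_of_nonneg _ (by positivity)
  nlinarith [mul_le_mul_of_nonneg_left hquad (mul_pos ht (exp_pos (-t))).le]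

section

variable {η η' c : ℝ}

theorem hasDerivAt_hellingerTransform (hη : η ≠ 0) (x : ℝ) :
    HasDerivAt (hellingerTransform η) (exp (-η * x)) x := by
  refine ((((hasDerivAt_id' x).const_mul (-η)).exp.const_sub 1).div_const η).congr_deriv ?_
  field_simp

theorem hasDerivAt_hellingerGap (hη : η ≠ 0) (hη' : η' ≠ 0) (x : ℝ) :
    HasDerivAt (hellingerGap η η' c) (exp (-η * x) * hellingerGapFactor η η' c x) x := by
  have := (((hasDerivAt_hellingerTransform hη x).const_mul c).sub
    ((hasDerivAt_hellingerTransform hη' x).const_mul (c - 1))).sub (hasDerivAt_id' x)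
  refine this.congr_deriv ?_
  have h₁ : exp (-η * x) * exp (-(η' - η) * x) = exp (-η' * x) := by rw [← exp_add]; ring_nf
  have h₂ : exp (-η * x) * exp (η * x) = 1 := by rw [← exp_add]; simp
  simp only [hellingerGapFactor]
  linear_combination (c - 1) * h₁ + h₂

theorem hellingerGap_zero : hellingerGap η η' c 0 = 0 := by
  simp [hellingerGap, hellingerTransform]

theorem hellingerGapFactor_zero : hellingerGapFactor η η' c 0 = 0 := by
  simp [hellingerGapFactor]

theorem hellingerGapFactor_le (hc : 1 ≤ c) (x : ℝ) :
    hellingerGapFactor η η' c x ≤ ((c - 1) * (η' - η) - η) * x := by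
  have h₁ := mul_le_mul_of_nonneg_left (add_one_le_exp (-(η' - η) * x)) (sub_nonneg.2 hc)
  have h₂ := add_one_le_exp (η * x)
  simp only [hellingerGapFactor]
  linarith

theorem concaveOn_hellingerGapFactor (hc : 1 ≤ c) :
    ConcaveOn ℝ univ (hellingerGapFactor η η' c) :=
  ((concaveOn_const c convex_univ).sub ((convexOn_exp_mul _).smul (sub_nonneg.2 hc))).sub
    (convexOn_exp_mul η)

theorem monotoneOn_hellingerGap (hη : η ≠ 0) (hη' : η' ≠ 0) {s : Set ℝ} (hs : Convex ℝ s)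
    (hw : ∀ t ∈ s, 0 ≤ hellingerGapFactor η η' c t) : MonotoneOn (hellingerGap η η' c) s :=
  monotoneOn_of_hasDerivWithinAt_nonneg hs
    (fun t _ => (hasDerivAt_hellingerGap hη hη' t).continuousAt.continuousWithinAt)
    (fun t _ => (hasDerivAt_hellingerGap hη hη' t).hasDerivWithinAt)
    fun t ht => mul_nonneg (exp_pos _).le (hw t (interior_subset ht))

theorem antitoneOn_hellingerGap (hη : η ≠ 0) (hη' : η' ≠ 0) {s : Set ℝ} (hs : Convex ℝ s)
    (hw : ∀ t ∈ s, hellingerGapFactor η η' c t ≤ 0) : AntitoneOn (hellingerGap η η' c) s :=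
  antitoneOn_of_hasDerivWithinAt_nonpos hs
    (fun t _ => (hasDerivAt_hellingerGap hη hη' t).continuousAt.continuousWithinAt)
    (fun t _ => (hasDerivAt_hellingerGap hη hη' t).hasDerivWithinAt)
    fun t ht => mul_nonpos_of_nonneg_of_nonpos (exp_pos _).le (hw t (interior_subset ht))

theorem hellingerGap_nonneg_of_nonpos (hη : η ≠ 0) (hη' : η' ≠ 0) (hc : 1 ≤ c)
    (hcη : η ≤ (c - 1) * (η' - η)) {x : ℝ} (hx : x ≤ 0) : 0 ≤ hellingerGap η η' c x := by
  have hanti : AntitoneOn (hellingerGap η η' c) (Iic 0) :=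
    antitoneOn_hellingerGap hη hη' (convex_Iic 0) fun t (ht : t ≤ 0) =>
      (hellingerGapFactor_le hc t).trans (mul_nonpos_of_nonneg_of_nonpos (by linarith) ht)
  simpa [hellingerGap_zero] using hanti hx self_mem_Iic hx

theorem hellingerGap_nonneg_of_mem_Icc (hη : η ≠ 0) (hη' : η' ≠ 0) (hc : 1 ≤ c) {x u : ℝ}
    (hx : x ∈ Icc 0 u) (hu : 0 ≤ hellingerGap η η' c u) : 0 ≤ hellingerGap η η' c x := by
  have hw := concaveOn_hellingerGapFactor (η := η) (η' := η') hc
  rcases le_or_gt 0 (hellingerGapFactor η η' c x) with hwx | hwx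
  · have hmono : MonotoneOn (hellingerGap η η' c) (Icc 0 x) :=
      monotoneOn_hellingerGap hη hη' (convex_Icc 0 x) fun t ht => by
        simpa [hellingerGapFactor_zero, hwx] using hw.min_le_of_mem_Icc trivial trivial ht
    simpa [hellingerGap_zero] using hmono (left_mem_Icc.2 hx.1) (right_mem_Icc.2 hx.1) hx.1
  · have hanti : AntitoneOn (hellingerGap η η' c) (Icc x u) :=
      antitoneOn_hellingerGap hη hη' (convex_Icc x u) fun t ht => by
        have := hw.min_le_of_mem_Icc trivial trivial ⟨hx.1, ht.1⟩
        rw [hellingerGapFactor_zero] at this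
        exact (min_lt_iff.1 (this.trans_lt hwx)).resolve_left (lt_irrefl 0) |>.le
    exact hu.trans (hanti (left_mem_Icc.2 hx.2) (right_mem_Icc.2 hx.2) hx.2)

end

section

variable {η η' u : ℝ}

theorem klHellingerConst_sub_one_mul (hηη' : η ≠ η') (hη' : η' ≠ 0) (u : ℝ) :
    (klHellingerConst η η' u - 1) * (η' - η) = η * (η' * u + 1) := by
  have : η' - η ≠ 0 := sub_ne_zero.2 hηη'.symm
  simp only [klHellingerConst]
  field_simp
  ring

theorem one_le_klHellingerConst (hη : 0 ≤ η) (hηη' : η < η') (hu : 0 ≤ u) :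
    1 ≤ klHellingerConst η η' u := by
  have hη' : 0 < η' := hη.trans_lt hηη'
  have h := klHellingerConst_sub_one_mul hηη'.ne hη'.ne' u
  have : 0 ≤ (klHellingerConst η η' u - 1) * (η' - η) := by rw [h]; positivity
  nlinarith

theorem hellingerGap_klHellingerConst_self_nonneg (hη : 0 < η) (hηη' : η < η') (hu : 0 < u) :
    0 ≤ hellingerGap η η' (klHellingerConst η η' u) u := by
  set T : ℝ → ℝ := fun t => (1 - (1 + t) * exp (-t)) / t ^ 2 with hT
  have hη' : 0 < η' := hη.trans hηη'
  have hid : hellingerGap η η' (klHellingerConst η η' u) u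
      = η * η' * u ^ 2 / (η' - η) * (T (η * u) - T (η' * u)) := by
    have : η' - η ≠ 0 := (sub_pos.2 hηη').ne'
    simp only [hT, hellingerGap, hellingerTransform, klHellingerConst, neg_mul]
    field_simp
    ring
  have hT_le : T (η' * u) ≤ T (η * u) :=
    antitoneOn_one_sub_one_add_mul_exp_neg_div_sq (mul_pos hη hu) (mul_pos hη' hu)
      (mul_le_mul_of_nonneg_right hηη'.le hu.le)
  rw [hid]
  exact mul_nonneg (div_nonneg (by positivity) (sub_pos.2 hηη').le) (sub_nonneg.2 hT_le)

theorem hellingerGap_klHellingerConst_nonneg (hη : 0 < η) (hηη' : η < η') (hu : 0 < u) {x : ℝ}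
    (hx : x ≤ u) : 0 ≤ hellingerGap η η' (klHellingerConst η η' u) x := by
  have hη' : 0 < η' := hη.trans hηη'
  have hc := one_le_klHellingerConst hη.le hηη' hu.le
  rcases le_or_gt x 0 with hx0 | hx0
  · refine hellingerGap_nonneg_of_nonpos hη.ne' hη'.ne' hc ?_ hx0
    rw [klHellingerConst_sub_one_mul hηη'.ne hη'.ne']
    nlinarith [mul_pos hη (mul_pos hη' hu)]
  · exact hellingerGap_nonneg_of_mem_Icc hη.ne' hη'.ne' hc ⟨hx0.le, hx⟩
      (hellingerGap_klHellingerConst_self_nonneg hη hηη' hu)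

end

section

variable {Ω : Type*} [MeasurableSpace Ω] {μ : Measure Ω} {L : Ω → ℝ} {η : ℝ}

theorem integrable_hellingerTransform [IsFiniteMeasure μ]
    (h : Integrable (fun ω => exp (-η * L ω)) μ) :
    Integrable (fun ω => hellingerTransform η (L ω)) μ :=
  ((integrable_const 1).sub h).div_const η

theorem integral_hellingerTransform [IsProbabilityMeasure μ]
    (h : Integrable (fun ω => exp (-η * L ω)) μ) :
    ∫ ω, hellingerTransform η (L ω) ∂μ = (1 - ∫ ω, exp (-η * L ω) ∂μ) / η := by
  simp only [hellingerTransform]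
  rw [integral_div, integral_sub (integrable_const 1) h]
  simp

end

theorem kl_le_hellinger_of_bounded_ratio_general
    {Ω : Type*} [MeasurableSpace Ω] (μ : Measure Ω) [IsProbabilityMeasure μ]
    (L : Ω → ℝ) {ηbar u : ℝ} (hu : 0 < u)
    (hL : Integrable L μ)
    (hcentralInt : Integrable (fun ω => Real.exp (-ηbar * L ω)) μ)
    (hcentral : ∫ ω, Real.exp (-ηbar * L ω) ∂μ ≤ 1)
    (hbdd : ∀ᵐ ω ∂μ, L ω ≤ u) :
    ∀ η : ℝ, 0 < η → η < ηbar →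
      Integrable (fun ω => Real.exp (-η * L ω)) μ →
      ∫ ω, L ω ∂μ
        ≤ ((η * u + 1) / (1 - η / ηbar))
            * ((1/η) * (1 - ∫ ω, Real.exp (-η * L ω) ∂μ)) := by
  intro η hη hηηbar hint
  set c := klHellingerConst η ηbar u
  have hc : 1 ≤ c := one_le_klHellingerConst hη.le hηηbar hu.le
  have hpointwise : ∀ᵐ ω ∂μ,
      L ω ≤ c * hellingerTransform η (L ω) - (c - 1) * hellingerTransform ηbar (L ω) :=
    hbdd.mono fun ω hω => sub_nonneg.1 (hellingerGap_klHellingerConst_nonneg hη hηηbar hu hω)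
  have hcentral' : 0 ≤ ∫ ω, hellingerTransform ηbar (L ω) ∂μ := by
    rw [integral_hellingerTransform hcentralInt]
    exact div_nonneg (sub_nonneg.2 hcentral) (hη.trans hηηbar).le
  have hη_int := integrable_hellingerTransform hint
  have hηbar_int := integrable_hellingerTransform hcentralInt
  calc ∫ ω, L ω ∂μ
      ≤ ∫ ω, (c * hellingerTransform η (L ω) - (c - 1) * hellingerTransform ηbar (L ω)) ∂μ :=
        integral_mono_ae hL ((hη_int.const_mul _).sub (hηbar_int.const_mul _)) hpointwise
    _ = c * ∫ ω, hellingerTransform η (L ω) ∂μ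
          - (c - 1) * ∫ ω, hellingerTransform ηbar (L ω) ∂μ := by
        rw [integral_sub (hη_int.const_mul _) (hηbar_int.const_mul _), integral_const_mul,
          integral_const_mul]
    _ ≤ c * ∫ ω, hellingerTransform η (L ω) ∂μ := sub_le_self _ (mul_nonneg (by linarith) hcentral')
    _ = _ := by rw [integral_hellingerTransform hint, one_div_mul_eq_div]; rfl

/-- Birgé–Massart generalization: if `E[e^{-η̄ L}] ≤ 1` and `L ≤ u` a.s. with `u > 0`,
then for every `η ∈ (0, η̄)`:
`E[L] ≤ ((ηu + 1)/(1 - η/η̄)) · (1/η)(1 - E[e^{-ηL}])`. -/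
theorem kl_le_hellinger_of_bounded_ratio
    {Ω : Type*} [MeasurableSpace Ω] (μ : Measure Ω) [IsProbabilityMeasure μ]
    (L : Ω → ℝ) {ηbar u : ℝ} (hηbar : 0 < ηbar) (hu : 0 < u)
    (hL : Integrable L μ)
    (hcentralInt : Integrable (fun ω => Real.exp (-ηbar * L ω)) μ)
    (hcentral : ∫ ω, Real.exp (-ηbar * L ω) ∂μ ≤ 1)
    (hbdd : ∀ᵐ ω ∂μ, L ω ≤ u) :
    ∀ η : ℝ, 0 < η → η < ηbar →
      Integrable (fun ω => Real.exp (-η * L ω)) μ →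
      ∫ ω, L ω ∂μ
        ≤ ((η * u + 1) / (1 - η / ηbar))
            * ((1/η) * (1 - ∫ ω, Real.exp (-η * L ω) ∂μ)) :=
  kl_le_hellinger_of_bounded_ratio_general μ L hu hL hcentralInt hcentral hbdd
end

section
/- (Rényi-to-KL under witness condition) Let L be a real random variable, η̄ > 0 with E[e^{-η̄L}] ≤ 1, and suppose for constants u > 0 and c ∈ (0,1] that E[L · 1{L ≤ u}] ≥ c E[L]. Then for all η ∈ (0, η̄): E[L] ≤ c_u · (1/η)(1 - E[e^{-ηL}]) ≤ c_u · (-(1/η) log E[e^{-ηL}]), where c_u := (1/c)(ηu + 1)/(1 - η/η̄). -/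
open MeasureTheory Real

/-! Everything rests on one pointwise inequality: for `0 < a ≤ b`, `u ≥ 0` and real `x`,
`a b (b - a) x 1{x ≤ u} ≤ b² (1 + a u) (1 - e^{-a x}) - a² (1 + b u) (1 - e^{-b x})`.
Take expectations at `x = L`, `a = η`, `b = η̄`: the central condition makes the last term
nonnegative in expectation and the witness condition bounds the left side below by
`c η η̄ (η̄ - η) E[L]`, which rearranges to the first bound; `log z ≤ z - 1` gives the second.

With `R(t) = e^{-t} - 1 + t ≥ 0`, so that `1 - e^{-t} = t - R(t)`, the pointwise inequality for
`x ≤ u` says that `η ↦ (1 + η u) R(η x) / η²` is nondecreasing; for `x > u` it follows from the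
concavity of `η ↦ 1 - e^{-η x}`. -/

noncomputable def expRem (t : ℝ) : ℝ := exp (-t) - 1 + t

lemma expRem_nonneg (t : ℝ) : 0 ≤ expRem t := by
  unfold expRem; linarith [add_one_le_exp (-t)]

lemma hasDerivAt_expRem (t : ℝ) : HasDerivAt expRem (1 - exp (-t)) t :=
  ((((hasDerivAt_neg t).exp).sub_const 1).add (hasDerivAt_id t)).congr_deriv (by ring)

lemma HasDerivAt.expRem {f : ℝ → ℝ} {f' y : ℝ} (hf : HasDerivAt f f' y) :
    HasDerivAt (fun y => expRem (f y)) (f' * (1 - Real.exp (-f y))) y :=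
  ((hasDerivAt_expRem (f y)).comp y hf).congr_deriv (mul_comm _ _)

lemma mul_one_sub_exp_neg_le {a b : ℝ} (ha : 0 < a) (hab : a ≤ b) (x : ℝ) :
    a * (1 - exp (-(b * x))) ≤ b * (1 - exp (-(a * x))) := by
  have hb : 0 < b := ha.trans_le hab
  have hconv := convexOn_exp.2 (Set.mem_univ (-(b * x))) (Set.mem_univ 0)
    (div_nonneg ha.le hb.le) (sub_nonneg.2 ((div_le_one hb).2 hab)) (add_sub_cancel _ _)
  have hpoint : a / b * -(b * x) + (1 - a / b) * 0 = -(a * x) := by field_simp; ring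
  simp only [smul_eq_mul, hpoint, exp_zero, mul_one] at hconv
  have := mul_le_mul_of_nonneg_left hconv hb.le
  rw [mul_add, ← mul_assoc, mul_div_cancel₀ _ hb.ne', mul_one_sub, mul_div_cancel₀ _ hb.ne'] at this
  linarith

lemma sq_mul_expRem_le_of_nonpos {a b x : ℝ} (ha : 0 < a) (hab : a ≤ b) (hx : x ≤ 0) :
    b ^ 2 * expRem (a * x) ≤ a ^ 2 * expRem (b * x) := by
  have hb : 0 < b := ha.trans_le hab
  have hderiv (y : ℝ) : HasDerivAt (fun y => a ^ 2 * expRem (b * y) - b ^ 2 * expRem (a * y))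
      (a * b * (a * (1 - exp (-(b * y))) - b * (1 - exp (-(a * y))))) y :=
    ((((hasDerivAt_id y).const_mul b).expRem.const_mul _).sub
      (((hasDerivAt_id y).const_mul a).expRem.const_mul _)).congr_deriv (by simp; ring)
  have hanti := antitone_of_hasDerivAt_nonpos hderiv fun y =>
    mul_nonpos_of_nonneg_of_nonpos (by positivity) (sub_nonpos.2 (mul_one_sub_exp_neg_le ha hab y))
  have := hanti hx
  simp only [mul_zero, show expRem 0 = 0 by simp [expRem], sub_self] at this
  linarith

lemma hasDerivAt_one_add_mul_expRem_div_sq {u x η : ℝ} (hη : η ≠ 0) :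
    HasDerivAt (fun η => (1 + η * u) * expRem (η * x) / η ^ 2)
      ((η * u * expRem (η * x) + (1 + η * u) * (η * x * (1 - exp (-(η * x)))
        - 2 * expRem (η * x))) / η ^ 3) η := by
  have hlin (c : ℝ) : HasDerivAt (fun η => η * c) c η := by simpa using (hasDerivAt_id η).mul_const c
  refine ((((hlin u).const_add 1).mul (hlin x).expRem).div (hasDerivAt_pow 2 η)
    (pow_ne_zero 2 hη)).congr_deriv ?_
  simp only [Pi.mul_apply]
  field_simp
  ring

-- the numerator of the derivative above, at `s = η u` and `t = η x`
lemma expRem_deriv_numerator_nonneg {s t : ℝ} (ht : 0 ≤ t) (hts : t ≤ s) :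
    0 ≤ s * expRem t + (1 + s) * (t * (1 - exp (-t)) - 2 * expRem t) := by
  have hexp (p : ℝ) (hp : p ≤ exp t) : p * exp (-t) ≤ 1 := by
    rw [exp_neg, ← div_eq_mul_inv, div_le_one (exp_pos t)]; exact hp
  have h1 := hexp _ (by linarith [add_one_le_exp t] : 1 + t ≤ exp t)
  have h2 := hexp _ (quadratic_le_exp_of_nonneg ht)
  unfold expRem
  -- the expression is `2 (1 - (1 + t + t²/2) e^{-t}) + (s - t) (1 - (1 + t) e^{-t})`
  linarith [mul_nonneg (sub_nonneg.2 hts) (sub_nonneg.2 h1)]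

lemma monotoneOn_one_add_mul_expRem_div_sq {u x : ℝ} (hx : 0 ≤ x) (hxu : x ≤ u) :
    MonotoneOn (fun η => (1 + η * u) * expRem (η * x) / η ^ 2) (Set.Ioi 0) := by
  have hderiv (η : ℝ) (hη : 0 < η) :=
    hasDerivAt_one_add_mul_expRem_div_sq (u := u) (x := x) hη.ne'
  refine monotoneOn_of_hasDerivWithinAt_nonneg (convex_Ioi 0)
    (fun η hη => (hderiv η hη).continuousAt.continuousWithinAt)
    (fun η hη => (hderiv η (by simpa using hη)).hasDerivWithinAt) fun η hη => ?_
  rw [interior_Ioi, Set.mem_Ioi] at hη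
  exact div_nonneg (expRem_deriv_numerator_nonneg (by positivity)
    (mul_le_mul_of_nonneg_left hxu hη.le)) (by positivity)

lemma sq_mul_one_add_mul_expRem_le {a b u x : ℝ} (ha : 0 < a) (hab : a ≤ b) (hu : 0 ≤ u)
    (hxu : x ≤ u) :
    b ^ 2 * ((1 + a * u) * expRem (a * x)) ≤ a ^ 2 * ((1 + b * u) * expRem (b * x)) := by
  have hb : 0 < b := ha.trans_le hab
  rcases le_total x 0 with hx | hx
  · calc b ^ 2 * ((1 + a * u) * expRem (a * x))
        = (1 + a * u) * (b ^ 2 * expRem (a * x)) := by ring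
      _ ≤ (1 + b * u) * (a ^ 2 * expRem (b * x)) :=
          mul_le_mul (by gcongr) (sq_mul_expRem_le_of_nonpos ha hab hx)
            (mul_nonneg (sq_nonneg b) (expRem_nonneg _)) (by positivity)
      _ = a ^ 2 * ((1 + b * u) * expRem (b * x)) := by ring
  · have := monotoneOn_one_add_mul_expRem_div_sq hx hxu ha hb hab
    rw [div_le_div_iff₀ (by positivity) (by positivity)] at this
    linarith

lemma mul_ite_le_sub_mul_one_sub_exp {a b u : ℝ} (ha : 0 < a) (hab : a ≤ b) (hu : 0 ≤ u)
    (x : ℝ) :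
    a * b * (b - a) * (if x ≤ u then x else 0)
      ≤ b ^ 2 * (1 + a * u) * (1 - exp (-a * x)) - a ^ 2 * (1 + b * u) * (1 - exp (-b * x)) := by
  have hb : 0 < b := ha.trans_le hab
  simp only [neg_mul]
  split_ifs with hxu
  · have := sq_mul_one_add_mul_expRem_le ha hab hu hxu
    unfold expRem at this
    linarith
  · have hx : 0 < x := hu.trans_lt (not_le.1 hxu)
    have hA : 0 ≤ 1 - exp (-(a * x)) := by
      rw [sub_nonneg, exp_le_one_iff, neg_nonpos]; positivity
    have hB : 0 ≤ 1 - exp (-(b * x)) := by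
      rw [sub_nonneg, exp_le_one_iff, neg_nonpos]; positivity
    nlinarith [mul_le_mul_of_nonneg_left (mul_one_sub_exp_neg_le ha hab x)
      (by positivity : 0 ≤ a * (1 + b * u)), mul_nonneg (mul_nonneg hb.le (sub_nonneg.2 hab)) hA]

lemma MeasureTheory.Integrable.ite_le {Ω : Type*} [MeasurableSpace Ω] {μ : Measure Ω} {L : Ω → ℝ}
    (hL : Integrable L μ) (u : ℝ) : Integrable (fun ω => if L ω ≤ u then L ω else 0) μ := by
  have hmeas : Measurable fun y : ℝ => if y ≤ u then y else 0 :=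
    measurable_id.ite measurableSet_Iic measurable_const
  refine hL.mono (hmeas.comp_aemeasurable hL.aemeasurable).aestronglyMeasurable
    (ae_of_all _ fun ω => ?_)
  split_ifs <;> simp

lemma mul_integral_ite_le {Ω : Type*} [MeasurableSpace Ω] {μ : Measure Ω} [IsProbabilityMeasure μ]
    {L : Ω → ℝ} {a b u : ℝ} (ha : 0 < a) (hab : a ≤ b) (hu : 0 ≤ u) (hL : Integrable L μ)
    (ha_int : Integrable (fun ω => exp (-a * L ω)) μ)
    (hb_int : Integrable (fun ω => exp (-b * L ω)) μ) (hb_le : ∫ ω, exp (-b * L ω) ∂μ ≤ 1) :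
    a * b * (b - a) * ∫ ω, (if L ω ≤ u then L ω else 0) ∂μ
      ≤ b ^ 2 * (1 + a * u) * (1 - ∫ ω, exp (-a * L ω) ∂μ) := by
  have h1a : Integrable (fun ω => 1 - exp (-a * L ω)) μ := (integrable_const 1).sub ha_int
  have h1b : Integrable (fun ω => 1 - exp (-b * L ω)) μ := (integrable_const 1).sub hb_int
  have hmono : ∫ ω, a * b * (b - a) * (if L ω ≤ u then L ω else 0) ∂μ
      ≤ ∫ ω, (b ^ 2 * (1 + a * u) * (1 - exp (-a * L ω))
        - a ^ 2 * (1 + b * u) * (1 - exp (-b * L ω))) ∂μ := integral_mono ((hL.ite_le u).const_mul _)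
    ((h1a.const_mul (b ^ 2 * (1 + a * u))).sub (h1b.const_mul (a ^ 2 * (1 + b * u))))
    fun ω => mul_ite_le_sub_mul_one_sub_exp ha hab hu (L ω)
  rw [integral_const_mul, integral_sub (h1a.const_mul _) (h1b.const_mul _), integral_const_mul,
    integral_const_mul, integral_sub (integrable_const 1) ha_int,
    integral_sub (integrable_const 1) hb_int] at hmono
  simp only [integral_const, probReal_univ, smul_eq_mul, mul_one] at hmono
  have : 0 ≤ a ^ 2 * (1 + b * u) * (1 - ∫ ω, exp (-b * L ω) ∂μ) := by
    have := sub_nonneg.2 hb_le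
    have hb : 0 < b := ha.trans_le hab
    positivity
  linarith

theorem renyi_to_kl_witness_general
    {Ω : Type*} [MeasurableSpace Ω] (μ : Measure Ω) [IsProbabilityMeasure μ]
    (L : Ω → ℝ)
    {ηbar u c : ℝ} (hu : 0 < u) (hc0 : 0 < c)
    (hL : Integrable L μ)
    (hcentralInt : Integrable (fun ω => Real.exp (-ηbar * L ω)) μ)
    (hcentral : ∫ ω, Real.exp (-ηbar * L ω) ∂μ ≤ 1)
    (hwitness : c * ∫ ω, L ω ∂μ ≤ ∫ ω, (if L ω ≤ u then L ω else 0) ∂μ) :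
    ∀ η : ℝ, 0 < η → η < ηbar →
      Integrable (fun ω => Real.exp (-η * L ω)) μ →
      (∫ ω, L ω ∂μ
          ≤ ((1/c) * (η * u + 1) / (1 - η / ηbar))
              * ((1/η) * (1 - ∫ ω, Real.exp (-η * L ω) ∂μ)))
      ∧ (((1/c) * (η * u + 1) / (1 - η / ηbar))
              * ((1/η) * (1 - ∫ ω, Real.exp (-η * L ω) ∂μ))
          ≤ ((1/c) * (η * u + 1) / (1 - η / ηbar))
              * (-(1/η) * Real.log (∫ ω, Real.exp (-η * L ω) ∂μ))) := by
  intro η hη hηη hInt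
  set Z := ∫ ω, exp (-η * L ω) ∂μ
  have hηbar : 0 < ηbar := hη.trans hηη
  have hgap : 0 < ηbar - η := sub_pos.2 hηη
  have hcu : 0 ≤ (1/c) * (η * u + 1) / (1 - η / ηbar) :=
    div_nonneg (by positivity) (sub_nonneg.2 ((div_le_one hηbar).2 hηη.le))
  refine ⟨?_, mul_le_mul_of_nonneg_left ?_ hcu⟩
  · have hkey := mul_integral_ite_le hη hηη.le hu.le hL hInt hcentralInt hcentral
    have hrhs : (1/c) * (η * u + 1) / (1 - η / ηbar) * ((1/η) * (1 - Z))
        = ηbar ^ 2 * (1 + η * u) * (1 - Z) / (c * (η * ηbar * (ηbar - η))) := by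
      field_simp
      ring
    rw [hrhs, le_div_iff₀ (by positivity)]
    calc (∫ ω, L ω ∂μ) * (c * (η * ηbar * (ηbar - η)))
        = c * (∫ ω, L ω ∂μ) * (η * ηbar * (ηbar - η)) := by ring
      _ ≤ (∫ ω, (if L ω ≤ u then L ω else 0) ∂μ) * (η * ηbar * (ηbar - η)) :=
          mul_le_mul_of_nonneg_right hwitness (by positivity)
      _ ≤ ηbar ^ 2 * (1 + η * u) * (1 - Z) := by linarith
  · have := log_le_sub_one_of_pos (integral_exp_pos hInt)
    rw [neg_mul, ← mul_neg]
    exact mul_le_mul_of_nonneg_left (by linarith) (by positivity)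

/-- Rényi-to-KL under the witness condition: if `E[e^{-η̄L}] ≤ 1` (strong central
condition) and `E[L·1{L ≤ u}] ≥ c E[L]` ((u,c)-witness condition), then for all
`η ∈ (0, η̄)`:
`E[L] ≤ c_u · (1/η)(1 - E[e^{-ηL}]) ≤ c_u · (-(1/η) log E[e^{-ηL}])`,
where `c_u = (1/c)(ηu + 1)/(1 - η/η̄)`. -/
theorem renyi_to_kl_witness
    {Ω : Type*} [MeasurableSpace Ω] (μ : Measure Ω) [IsProbabilityMeasure μ]
    (L : Ω → ℝ) (hLmeas : Measurable L)
    {ηbar u c : ℝ} (hηbar : 0 < ηbar) (hu : 0 < u) (hc0 : 0 < c) (hc1 : c ≤ 1)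
    (hL : Integrable L μ)
    (hcentralInt : Integrable (fun ω => Real.exp (-ηbar * L ω)) μ)
    (hcentral : ∫ ω, Real.exp (-ηbar * L ω) ∂μ ≤ 1)
    (hwitness : c * ∫ ω, L ω ∂μ ≤ ∫ ω, (if L ω ≤ u then L ω else 0) ∂μ) :
    ∀ η : ℝ, 0 < η → η < ηbar →
      Integrable (fun ω => Real.exp (-η * L ω)) μ →
      (∫ ω, L ω ∂μ
          ≤ ((1/c) * (η * u + 1) / (1 - η / ηbar))
              * ((1/η) * (1 - ∫ ω, Real.exp (-η * L ω) ∂μ)))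
      ∧ (((1/c) * (η * u + 1) / (1 - η / ηbar))
              * ((1/η) * (1 - ∫ ω, Real.exp (-η * L ω) ∂μ))
          ≤ ((1/c) * (η * u + 1) / (1 - η / ηbar))
              * (-(1/η) * Real.log (∫ ω, Real.exp (-η * L ω) ∂μ))) :=
  renyi_to_kl_witness_general μ L hu hc0 hL hcentralInt hcentral hwitness
end

section
/- (Bernstein implies witness) Suppose a real random variable L with E[L] ≥ 0 satisfies E[L²] ≤ B (E[L])^β for constants B > 0 and β ∈ (0,1]. Then for any u > B, E[L · 1{L > u (E[L])^{β-1}}] ≤ (B/u) E[L]; equivalently, the (τ, c)-witness condition holds with τ(x) = u x^{β-1} and c = 1 - B/u. -/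
open MeasureTheory Real

/-- Bernstein implies witness: if `E[L] > 0` and `E[L²] ≤ B (E[L])^β` with `B > 0`,
`β ∈ (0,1]`, then for any `u > B`:
`E[L·1{L > u (E[L])^{β-1}}] ≤ (B/u) E[L]`. -/
theorem bernstein_implies_witness
    {Ω : Type*} [MeasurableSpace Ω] (μ : Measure Ω) [IsProbabilityMeasure μ]
    (L : Ω → ℝ) (hLmeas : Measurable L)
    {B β u : ℝ} (hB : 0 < B) (hβ0 : 0 < β) (hβ1 : β ≤ 1) (hu : B < u)
    (hL : Integrable L μ) (hL2 : Integrable (fun ω => (L ω)^2) μ)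
    (hpos : 0 < ∫ ω, L ω ∂μ)
    (hbern : ∫ ω, (L ω)^2 ∂μ ≤ B * (∫ ω, L ω ∂μ) ^ β) :
    ∫ ω, (if u * (∫ ω', L ω' ∂μ) ^ (β - 1) < L ω then L ω else 0) ∂μ
      ≤ (B / u) * ∫ ω, L ω ∂μ := by
  set m := ∫ ω, L ω ∂μ with hm
  set t := u * m ^ (β - 1) with htdef
  have hu0 : (0:ℝ) < u := hB.trans hu
  have hmp : (0:ℝ) < m ^ (β - 1) := Real.rpow_pos_of_pos hpos _
  have ht : 0 < t := mul_pos hu0 hmp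
  have hint : Integrable (fun ω => if t < L ω then L ω else 0) μ := by
    have : (fun ω => if t < L ω then L ω else 0)
        = Set.indicator {ω | t < L ω} L := by
      ext ω; simp [Set.indicator_apply, Set.mem_setOf_eq]
    rw [this]
    exact hL.indicator (measurableSet_lt measurable_const hLmeas)
  have hbound : ∀ ω, (if t < L ω then L ω else 0) ≤ (L ω)^2 / t := by
    intro ω
    by_cases h : t < L ω
    · simp only [h, if_pos]
      rw [le_div_iff₀ ht]
      nlinarith
    · simp only [h, if_neg, not_false_iff]
      positivity
  calc ∫ ω, (if t < L ω then L ω else 0) ∂μ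
      ≤ ∫ ω, (L ω)^2 / t ∂μ := by
        exact integral_mono hint (hL2.div_const t) hbound
    _ = (∫ ω, (L ω)^2 ∂μ) / t := integral_div t _
    _ ≤ (B * m ^ β) / t := by
        exact div_le_div_of_nonneg_right hbern ht.le
    _ = (B / u) * m := by
        rw [htdef]
        have : m ^ β = m ^ (β - 1) * m := by
          rw [← Real.rpow_add_one hpos.ne' (β - 1)]
          ring_nf
        rw [this]
        field_simp
end

section
/- (Generalized small-ball implies weakened small-ball) Let S be a nonnegative random variable with E[S] > 0 and suppose P(S ≥ C₁ E[S]) ≥ C₂ for constants C₁ > 0, C₂ ∈ (0, 1]. Then E[S · 1{S < (2/C₂) E[S]}] ≥ (C₁C₂/2) E[S]. -/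
open MeasureTheory Real

/-! Markov's inequality puts mass at most `C₂ / 2` above the level `t = (2 / C₂) E[S]`, so at
least `C₂ / 2` of the mass of `{S ≥ C₁ E[S]}` lies below `t`. On that event the truncated variable
`S · 1{S < t}` is at least `C₁ E[S]`, and Markov's inequality for the truncated variable gives the
bound. -/

namespace MeasureTheory

variable {Ω : Type*} [MeasurableSpace Ω] {μ : Measure Ω} {S : Ω → ℝ}

theorem measureReal_mul_integral_le_le_inv (hSnn : 0 ≤ᵐ[μ] S) (hS : Integrable S μ)
    (hpos : 0 < ∫ ω, S ω ∂μ) {c : ℝ} (hc : 0 < c) :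
    μ.real {ω | c * ∫ ω', S ω' ∂μ ≤ S ω} ≤ c⁻¹ := by
  have h_markov := mul_meas_ge_le_integral_of_nonneg hSnn hS (c * ∫ ω, S ω ∂μ)
  rw [inv_eq_one_div, le_div_iff₀' hc]
  refine le_of_mul_le_mul_right ?_ hpos
  linarith

theorem mul_measureReal_le_integral_ite_lt [IsFiniteMeasure μ] (hSmeas : Measurable S)
    (hSnn : 0 ≤ᵐ[μ] S) (hS : Integrable S μ) {a : ℝ} (ha : 0 ≤ a) (t : ℝ) :
    a * μ.real {ω | a ≤ S ω ∧ S ω < t} ≤ ∫ ω, (if S ω < t then S ω else 0) ∂μ := by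
  have h_int : Integrable (fun ω => if S ω < t then S ω else 0) μ := by
    refine (hS.indicator (measurableSet_lt hSmeas (measurable_const (a := t)))).congr
      (.of_forall fun ω => ?_)
    simp [Set.indicator_apply]
  have h_nonneg : 0 ≤ᵐ[μ] fun ω => if S ω < t then S ω else 0 := by
    filter_upwards [hSnn] with ω hω
    exact ite_nonneg hω le_rfl
  refine le_trans (mul_le_mul_of_nonneg_left (measureReal_mono ?_) ha)
    (mul_meas_ge_le_integral_of_nonneg h_nonneg h_int a)
  rintro ω ⟨haS, hSt⟩
  simpa [hSt] using haS

end MeasureTheory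

theorem small_ball_implies_weakened_small_ball_general
    {Ω : Type*} [MeasurableSpace Ω] (μ : Measure Ω) [IsProbabilityMeasure μ]
    (S : Ω → ℝ) (hSmeas : Measurable S) (hSnn : ∀ᵐ ω ∂μ, 0 ≤ S ω)
    (hS : Integrable S μ) (hpos : 0 < ∫ ω, S ω ∂μ)
    {C₁ C₂ : ℝ} (hC₁ : 0 < C₁) (hC₂0 : 0 < C₂)
    (hsb : ENNReal.ofReal C₂ ≤ μ {ω | C₁ * ∫ ω', S ω' ∂μ ≤ S ω}) :
    (C₁ * C₂ / 2) * ∫ ω, S ω ∂μ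
      ≤ ∫ ω, (if S ω < (2 / C₂) * ∫ ω', S ω' ∂μ then S ω else 0) ∂μ := by
  set m := ∫ ω, S ω ∂μ
  set t := (2 / C₂) * m
  have h_small_ball : C₂ ≤ μ.real {ω | C₁ * m ≤ S ω} :=
    (ENNReal.ofReal_le_iff_le_toReal (measure_ne_top _ _)).1 hsb
  have h_tail : μ.real {ω | t ≤ S ω} ≤ C₂ / 2 := by
    have h_markov :=
      measureReal_mul_integral_le_le_inv hSnn hS hpos (by positivity : 0 < 2 / C₂)
    rwa [inv_div] at h_markov
  have h_mid : C₂ / 2 ≤ μ.real {ω | C₁ * m ≤ S ω ∧ S ω < t} := by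
    have h_sdiff :=
      le_measureReal_sdiff (μ := μ) (s₁ := {ω | C₁ * m ≤ S ω}) (s₂ := {ω | t ≤ S ω})
    have h_eq : {ω | C₁ * m ≤ S ω} \ {ω | t ≤ S ω} = {ω | C₁ * m ≤ S ω ∧ S ω < t} := by
      ext ω; simp
    rw [h_eq] at h_sdiff
    linarith
  have hC₁m : 0 ≤ C₁ * m := by positivity
  calc (C₁ * C₂ / 2) * m = (C₁ * m) * (C₂ / 2) := by ring
    _ ≤ (C₁ * m) * μ.real {ω | C₁ * m ≤ S ω ∧ S ω < t} := by gcongr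
    _ ≤ _ := mul_measureReal_le_integral_ite_lt hSmeas hSnn hS hC₁m t

/-- Generalized small-ball implies weakened small-ball: if `S ≥ 0`, `E[S] > 0` and
`P(S ≥ C₁ E[S]) ≥ C₂` with `C₁ > 0`, `C₂ ∈ (0,1]`, then
`E[S · 1{S < (2/C₂) E[S]}] ≥ (C₁C₂/2) E[S]`. -/
theorem small_ball_implies_weakened_small_ball
    {Ω : Type*} [MeasurableSpace Ω] (μ : Measure Ω) [IsProbabilityMeasure μ]
    (S : Ω → ℝ) (hSmeas : Measurable S) (hSnn : ∀ᵐ ω ∂μ, 0 ≤ S ω)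
    (hS : Integrable S μ) (hpos : 0 < ∫ ω, S ω ∂μ)
    {C₁ C₂ : ℝ} (hC₁ : 0 < C₁) (hC₂0 : 0 < C₂) (hC₂1 : C₂ ≤ 1)
    (hsb : ENNReal.ofReal C₂ ≤ μ {ω | C₁ * ∫ ω', S ω' ∂μ ≤ S ω}) :
    (C₁ * C₂ / 2) * ∫ ω, S ω ∂μ
      ≤ ∫ ω, (if S ω < (2 / C₂) * ∫ ω', S ω' ∂μ then S ω else 0) ∂μ :=
  small_ball_implies_weakened_small_ball_general μ S hSmeas hSnn hS hpos hC₁ hC₂0 hsb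
end

section
/- (Misspecification bound via density-ratio bound) Let P, P* be probability measures with sup_z dP(z)/dP*(z) = C < ∞, let Q be another distribution, and let L(z) = log(p*(z)/q(z)) for densities p*, q of P* and Q. Then E_{Z∼P}[L] ≤ C·(D + √(2D)) where D = KL(P*‖Q) = E_{Z∼P*}[L]. -/
open MeasureTheory Real

/-- `φ(x) = x log x - x + 1 ≥ 0` for `x ≥ 0`. -/
lemma phi_nonneg {x : ℝ} (hx : 0 ≤ x) : 0 ≤ x * Real.log x - x + 1 := by
  rcases eq_or_lt_of_le hx with h | h
  · simp [← h]
  · have h1 : Real.log (1/x) ≤ 1/x - 1 := Real.log_le_sub_one_of_pos (by positivity)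
    rw [one_div, Real.log_inv] at h1
    have h2 : x * (-Real.log x) ≤ x * (x⁻¹ - 1) := by
      exact mul_le_mul_of_nonneg_left h1 hx
    have h3 : x * x⁻¹ = 1 := mul_inv_cancel₀ h.ne'
    nlinarith

/-- Key analytic inequality: `(x log x)² ≤ 2 (x log x - x + 1)` for `0 < x ≤ 1`. -/
lemma key_sq {x : ℝ} (hx : 0 < x) (hx1 : x ≤ 1) :
    (x * Real.log x)^2 ≤ 2 * (x * Real.log x - x + 1) := by
  set g : ℝ → ℝ := fun t => 2 * (t * Real.log t - t + 1) - (t * Real.log t)^2 with hg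
  have hderiv : ∀ t ∈ Set.Ioo (0:ℝ) 1, HasDerivAt g
      (2 * Real.log t * (1 - t - t * Real.log t)) t := by
    intro t ht
    have hml : HasDerivAt (fun s => s * Real.log s) (Real.log t + 1) t :=
      Real.hasDerivAt_mul_log ht.1.ne'
    have h1 : HasDerivAt (fun s => 2 * (s * Real.log s - s + 1))
        (2 * (Real.log t + 1 - 1)) t := (((hml.sub (hasDerivAt_id t)).add_const 1).const_mul 2)
    have h2 : HasDerivAt (fun s => (s * Real.log s)^2)
        (2 * (t * Real.log t) * (Real.log t + 1)) t := by
      simpa [Pi.pow_def] using (hml.pow 2)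
    have := h1.sub h2
    have : HasDerivAt g (2 * (Real.log t + 1 - 1) - 2 * (t * Real.log t) * (Real.log t + 1)) t := this
    convert this using 1
    ring
  have hanti : AntitoneOn g (Set.Icc x 1) := by
    apply antitoneOn_of_deriv_nonpos (convex_Icc x 1)
    · apply ContinuousOn.sub
      · apply ContinuousOn.mul continuousOn_const
        apply ContinuousOn.add (ContinuousOn.sub ?_ continuousOn_id) continuousOn_const
        · exact continuousOn_id.mul (Real.continuousOn_log.mono (by
            intro t ht; exact ne_of_gt (lt_of_lt_of_le hx ht.1)))
      · apply ContinuousOn.pow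
        exact continuousOn_id.mul (Real.continuousOn_log.mono (by
            intro t ht; exact ne_of_gt (lt_of_lt_of_le hx ht.1)))
    · intro t ht
      rw [interior_Icc] at ht
      have ht' : t ∈ Set.Ioo (0:ℝ) 1 := ⟨lt_of_lt_of_le hx (le_of_lt ht.1), ht.2⟩
      exact ((hderiv t ht').differentiableAt).differentiableWithinAt
    · intro t ht
      rw [interior_Icc] at ht
      have ht' : t ∈ Set.Ioo (0:ℝ) 1 := ⟨lt_of_lt_of_le hx (le_of_lt ht.1), ht.2⟩
      rw [(hderiv t ht').deriv]
      have hlog : Real.log t ≤ 0 := Real.log_nonpos (le_of_lt ht'.1) (le_of_lt ht'.2)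
      have hfac : 0 ≤ 1 - t - t * Real.log t := by
        have : 0 ≤ t * (-Real.log t) := mul_nonneg (le_of_lt ht'.1) (by linarith)
        nlinarith [ht'.2.le]
      exact mul_nonpos_of_nonpos_of_nonneg (by linarith) hfac
  have h1mem : (1:ℝ) ∈ Set.Icc x 1 := ⟨hx1, le_refl 1⟩
  have hxmem : x ∈ Set.Icc x 1 := ⟨le_refl x, hx1⟩
  have := hanti hxmem h1mem hx1
  have hg1 : g 1 = 0 := by simp [hg]
  rw [hg1] at this
  simp only [hg] at this
  linarith

/-- pointwise inequality `x · max(-log x, 0) ≤ √(2(x log x - x + 1))` for `x ≥ 0`. -/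
lemma key_ineq {x : ℝ} (hx : 0 ≤ x) :
    x * max (-Real.log x) 0 ≤ Real.sqrt (2 * (x * Real.log x - x + 1)) := by
  rcases eq_or_lt_of_le hx with h | h
  · simp [← h, Real.sqrt_nonneg]
  rcases le_or_gt x 1 with hx1 | hx1
  · have hlog : Real.log x ≤ 0 := Real.log_nonpos hx hx1
    rw [max_eq_left (by linarith)]
    have hnn : 0 ≤ x * -Real.log x := mul_nonneg hx (by linarith)
    rw [Real.le_sqrt hnn (by nlinarith [phi_nonneg hx])]
    have : (x * -Real.log x)^2 = (x * Real.log x)^2 := by ring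
    rw [this]
    exact key_sq h hx1
  · have : max (-Real.log x) 0 = 0 := max_eq_right (by
      have := Real.log_nonneg (le_of_lt hx1); linarith)
    rw [this, mul_zero]
    exact Real.sqrt_nonneg _

/-- Jensen for sqrt on a probability space. -/
lemma integral_sqrt_le {α : Type*} [MeasurableSpace α] (μ : Measure α) [IsProbabilityMeasure μ]
    {h : α → ℝ} (hint : Integrable h μ) (hpos : ∀ᵐ x ∂μ, 0 ≤ h x) :
    ∫ x, Real.sqrt (h x) ∂μ ≤ Real.sqrt (∫ x, h x ∂μ) := by
  set I := ∫ x, h x ∂μ with hI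
  have hInn : 0 ≤ I := integral_nonneg_of_ae hpos
  have hsqrt_int : Integrable (fun x => Real.sqrt (h x)) μ := by
    apply Integrable.mono' ((hint.add (integrable_const 1)).div_const 2)
    · exact (Real.continuous_sqrt.comp_aestronglyMeasurable hint.1)
    · filter_upwards [hpos] with x hx
      rw [Real.norm_eq_abs, abs_of_nonneg (Real.sqrt_nonneg _)]
      simp only [Pi.add_apply]
      nlinarith [Real.sq_sqrt hx, Real.sqrt_nonneg (h x), sq_nonneg (Real.sqrt (h x) - 1)]
  rcases eq_or_lt_of_le hInn with h0 | h0
  · have hzero : h =ᵐ[μ] 0 := by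
      rw [← integral_eq_zero_iff_of_nonneg_ae hpos hint]
      exact h0.symm
    have : ∫ x, Real.sqrt (h x) ∂μ = 0 := by
      rw [integral_eq_zero_iff_of_nonneg_ae ?_ hsqrt_int]
      · filter_upwards [hzero] with x hx; simp [Pi.zero_apply] at hx; simp [hx]
      · filter_upwards with x; exact Real.sqrt_nonneg _
    rw [this]; exact Real.sqrt_nonneg _
  · set l := Real.sqrt I with hl
    have hlpos : 0 < l := Real.sqrt_pos.mpr h0
    have hpt : ∀ᵐ x ∂μ, Real.sqrt (h x) ≤ (h x / l + l) / 2 := by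
      filter_upwards [hpos] with x hx
      have hslpos : 0 < Real.sqrt l := Real.sqrt_pos.mpr hlpos
      have hab : (Real.sqrt (h x) / Real.sqrt l) * Real.sqrt l = Real.sqrt (h x) :=
        div_mul_cancel₀ _ (ne_of_gt hslpos)
      have h2 : 2 * Real.sqrt (h x) * 1 ≤ (Real.sqrt (h x) / Real.sqrt l)^2 + (Real.sqrt l)^2 := by
        nlinarith [sq_nonneg (Real.sqrt (h x) / Real.sqrt l - Real.sqrt l), hab]
      have hsl : (Real.sqrt l)^2 = l := Real.sq_sqrt hlpos.le
      have hsx : (Real.sqrt (h x))^2 = h x := Real.sq_sqrt hx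
      have : (Real.sqrt (h x) / Real.sqrt l)^2 = h x / l := by
        rw [div_pow, hsx, hsl]
      rw [this, hsl] at h2
      linarith
    calc ∫ x, Real.sqrt (h x) ∂μ ≤ ∫ x, (h x / l + l) / 2 ∂μ := by
          apply integral_mono_ae hsqrt_int (((hint.div_const l).add (integrable_const l)).div_const 2) hpt
      _ = (I / l + l) / 2 := by
          rw [integral_div, integral_add (hint.div_const l) (integrable_const l),
            integral_div, integral_const]
          simp [hI]
      _ = l := by
          rw [hl]
          rw [div_add' _ _ _ (ne_of_gt hlpos)]
          rw [div_div]
          have : Real.sqrt I * Real.sqrt I = I := Real.mul_self_sqrt hInn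
          field_simp
          nlinarith [this]

/-- Misspecification bound via density-ratio bound: if `dP/dP* ≤ C` a.e., `P* ≪ Q`,
`L(z) = log (dP*/dQ)(z)` and `D = E_{P*}[L] = KL(P*‖Q)`, then
`E_P[L] ≤ C (D + √(2D))`. -/
theorem misspecification_bound_via_ratio
    {Z : Type*} [MeasurableSpace Z] (P Pstar Q : Measure Z)
    [IsProbabilityMeasure P] [IsProbabilityMeasure Pstar] [IsProbabilityMeasure Q]
    {C : ℝ} (hC : 0 ≤ C)
    (hPac : P ≪ Pstar)
    (hbound : ∀ᵐ z ∂Pstar, P.rnDeriv Pstar z ≤ ENNReal.ofReal C)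
    (hQac : Pstar ≪ Q)
    (hLP : Integrable (fun z => Real.log ((Pstar.rnDeriv Q z).toReal)) P)
    (hLPs : Integrable (fun z => Real.log ((Pstar.rnDeriv Q z).toReal)) Pstar) :
    ∫ z, Real.log ((Pstar.rnDeriv Q z).toReal) ∂P
      ≤ C * ((∫ z, Real.log ((Pstar.rnDeriv Q z).toReal) ∂Pstar)
          + Real.sqrt (2 * ∫ z, Real.log ((Pstar.rnDeriv Q z).toReal) ∂Pstar)) := by
  set r : Z → ℝ := fun z => (Pstar.rnDeriv Q z).toReal with hr
  set D : ℝ := ∫ z, Real.log (r z) ∂Pstar with hD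
  have hrnonneg : ∀ z, 0 ≤ r z := fun z => ENNReal.toReal_nonneg
  -- integrability of r * log r and of r w.r.t. Q
  have h_rL_int : Integrable (fun z => r z * Real.log (r z)) Q := by
    have := (integrable_rnDeriv_smul_iff (f := fun z => Real.log (r z)) hQac).mpr hLPs
    simpa [smul_eq_mul] using this
  have h_r_int : Integrable r Q := Measure.integrable_toReal_rnDeriv
  have h_phi_int : Integrable (fun z => r z * Real.log (r z) - r z + 1) Q :=
    (h_rL_int.sub h_r_int).add (integrable_const 1)
  have h_int_phi : ∫ z, (r z * Real.log (r z) - r z + 1) ∂Q = D := by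
    have ea : ∫ z, ((r z * Real.log (r z) - r z) + 1) ∂Q
        = (∫ z, (r z * Real.log (r z) - r z) ∂Q) + ∫ _z, (1:ℝ) ∂Q :=
      integral_add (by exact h_rL_int.sub h_r_int) (integrable_const 1)
    have eb : ∫ z, (r z * Real.log (r z) - r z) ∂Q
        = (∫ z, r z * Real.log (r z) ∂Q) - ∫ z, r z ∂Q :=
      integral_sub h_rL_int h_r_int
    have h1 : ∫ z, r z * Real.log (r z) ∂Q = D := by
      have := integral_rnDeriv_smul (f := fun z => Real.log (r z)) hQac
      simpa [smul_eq_mul] using this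
    have h2 : ∫ z, r z ∂Q = 1 := by
      rw [hr]
      rw [Measure.integral_toReal_rnDeriv hQac]
      simp
    have ec : ∫ _z, (1:ℝ) ∂Q = 1 := by simp
    rw [ea, eb, h1, h2, ec]
    ring
  have hD_nonneg : 0 ≤ D := by
    rw [← h_int_phi]
    exact integral_nonneg fun z => phi_nonneg (hrnonneg z)
  -- negative part bound (Yang–Barron)
  have h_negpart_Pstar : Integrable (fun z => max (-Real.log (r z)) 0) Pstar := hLPs.neg.pos_part
  have h_eq_neg : ∫ z, max (-Real.log (r z)) 0 ∂Pstar
      = ∫ z, r z * max (-Real.log (r z)) 0 ∂Q := by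
    have := integral_rnDeriv_smul (f := fun z => max (-Real.log (r z)) 0) hQac
    simp only [smul_eq_mul] at this
    rw [← this]
  have h2phi_int : Integrable (fun z => 2 * (r z * Real.log (r z) - r z + 1)) Q :=
    h_phi_int.const_mul 2
  have hsq_int : Integrable (fun z => Real.sqrt (2 * (r z * Real.log (r z) - r z + 1))) Q := by
    apply Integrable.mono' ((h2phi_int.add (integrable_const 1)).div_const 2)
    · exact Real.continuous_sqrt.comp_aestronglyMeasurable h2phi_int.1
    · filter_upwards with z
      rw [Real.norm_eq_abs, abs_of_nonneg (Real.sqrt_nonneg _)]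
      simp only [Pi.add_apply]
      have h2p : 0 ≤ 2 * (r z * Real.log (r z) - r z + 1) := by
        have := phi_nonneg (hrnonneg z); linarith
      nlinarith [Real.sq_sqrt h2p, Real.sqrt_nonneg (2 * (r z * Real.log (r z) - r z + 1)),
        sq_nonneg (Real.sqrt (2 * (r z * Real.log (r z) - r z + 1)) - 1)]
  have h_yb : ∫ z, max (-Real.log (r z)) 0 ∂Pstar ≤ Real.sqrt (2 * D) := by
    rw [h_eq_neg]
    calc ∫ z, r z * max (-Real.log (r z)) 0 ∂Q
        ≤ ∫ z, Real.sqrt (2 * (r z * Real.log (r z) - r z + 1)) ∂Q := by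
          apply integral_mono_of_nonneg
          · filter_upwards with z
            exact mul_nonneg (hrnonneg z) (le_max_right _ _)
          · exact hsq_int
          · filter_upwards with z
            exact key_ineq (hrnonneg z)
      _ ≤ Real.sqrt (∫ z, 2 * (r z * Real.log (r z) - r z + 1) ∂Q) := by
          apply integral_sqrt_le Q h2phi_int
          filter_upwards with z
          have := phi_nonneg (hrnonneg z); linarith
      _ = Real.sqrt (2 * D) := by rw [integral_const_mul, h_int_phi]
  -- positive part bound wrt Pstar
  have h_pos_Pstar : ∫ z, max (Real.log (r z)) 0 ∂Pstar ≤ D + Real.sqrt (2 * D) := by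
    have hsplit : ∫ z, max (Real.log (r z)) 0 ∂Pstar
        = D + ∫ z, max (-Real.log (r z)) 0 ∂Pstar := by
      rw [hD, ← integral_add hLPs h_negpart_Pstar]
      apply integral_congr_ae
      filter_upwards with z
      rcases le_or_gt 0 (Real.log (r z)) with h | h
      · rw [max_eq_left h, max_eq_right (by linarith)]; ring
      · rw [max_eq_right h.le, max_eq_left (by linarith)]; ring
    rw [hsplit]
    linarith
  -- change of measure from P to Pstar on the positive part
  have hposP : Integrable (fun z => max (Real.log (r z)) 0) P := hLP.pos_part
  have h_step2 : ∫ z, max (Real.log (r z)) 0 ∂P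
      ≤ C * ∫ z, max (Real.log (r z)) 0 ∂Pstar := by
    have heq := integral_rnDeriv_smul (f := fun z => max (Real.log (r z)) 0) hPac
    simp only [smul_eq_mul] at heq
    rw [← heq, ← integral_const_mul]
    apply integral_mono_ae
    · have := (integrable_rnDeriv_smul_iff
        (f := fun z => max (Real.log (r z)) 0) hPac).mpr hposP
      simpa [smul_eq_mul] using this
    · exact (hLPs.pos_part).const_mul C
    · filter_upwards [hbound] with z hz
      have h1 : (P.rnDeriv Pstar z).toReal ≤ C := ENNReal.toReal_le_of_le_ofReal hC hz
      exact mul_le_mul_of_nonneg_right h1 (le_max_right _ _)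
  have hfinal1 : ∫ z, Real.log (r z) ∂P ≤ ∫ z, max (Real.log (r z)) 0 ∂P :=
    integral_mono hLP hposP fun z => le_max_left _ _
  calc ∫ z, Real.log (r z) ∂P ≤ ∫ z, max (Real.log (r z)) 0 ∂P := hfinal1
    _ ≤ C * ∫ z, max (Real.log (r z)) 0 ∂Pstar := h_step2
    _ ≤ C * (D + Real.sqrt (2 * D)) := mul_le_mul_of_nonneg_left h_pos_Pstar hC
end
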